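/- arXiv:1610.09822 — 2 statements merged into one kernel-verified Lean document; each statement's English description precedes it below -/
import Mathlib

section
/- Every nonzero object E of C admits a Harder–Narasimhan filtration, i.e. a strictly increasing chain of subobjects 0 = F₀ < F₁ < ⋯ < Fₙ = E such that each successive quotient Fᵢ/Fᵢ₋₁ (for 1 ≤ i ≤ n) is semi-stable and the slopes satisfy μ(F₁/F₀) > μ(F₂/F₁) > ⋯ > μ(Fₙ/Fₙ₋₁). -/
open CategoryTheory CategoryTheory.Limits

universe v u v' u'

/-- A Harder–Narasimhan setting: an exact additive functor `η : C ⥤ A` between abelian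
categories, a degree function `d` on objects of `C` additive on short exact sequences,
and a rank function `r` on objects of `A` additive on short exact sequences, satisfying
axioms (HN1), (HN2), (HN3). -/
structure HNSetting (C : Type u) (A : Type u') [Category.{v} C] [Category.{v'} A]
    [Abelian C] [Abelian A] where
  /-- the fibre functor -/
  η : C ⥤ A
  η_additive : η.Additive
  /-- `η` is exact: it preserves finite limits and finite colimits -/
  η_preservesFiniteLimits : PreservesFiniteLimits η
  η_preservesFiniteColimits : PreservesFiniteColimits η
  /-- the degree function -/
  d : C → ℕ
  /-- the rank function -/
  r : A → ℕ
  d_additive : ∀ S : ShortComplex C, S.ShortExact → d S.X₂ = d S.X₁ + d S.X₃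
  r_additive : ∀ S : ShortComplex A, S.ShortExact → r S.X₂ = r S.X₁ + r S.X₃
  /-- (HN1) -/
  hn1 : ∀ E : C, r (η.obj E) = 0 ↔ IsZero E
  /-- (HN2) -/
  hn2 : ∀ {E E' : C} (f : E ⟶ E'), IsIso (η.map f) →
    d E ≤ d E' ∧ (d E = d E' ↔ IsIso f)
  /-- (HN3): `η` maps the subobjects of `E` injectively to those of `η(E)`. -/
  hn3 : ∀ {E : C} (F₁ F₂ : Subobject E),
    (∃ e : η.obj ((F₁ : C)) ≅ η.obj ((F₂ : C)),
      e.hom ≫ η.map F₂.arrow = η.map F₁.arrow) → F₁ = F₂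

namespace HNSetting

variable {C : Type u} {A : Type u'} [Category.{v} C] [Category.{v'} A]
  [Abelian C] [Abelian A]

/-- The slope `μ(E) = d(E) / r(η(E))` of an object of `C`. -/
def slope (h : HNSetting C A) (E : C) : ℚ :=
  (h.d E : ℚ) / (h.r (h.η.obj E) : ℚ)

/-- An object `E` is semi-stable if it is nonzero and `μ(E') ≤ μ(E)` for every nonzero
subobject `E'` of `E`. -/
def Semistable (h : HNSetting C A) (E : C) : Prop :=
  ¬ IsZero E ∧ ∀ F : Subobject E, ¬ IsZero ((F : C)) → h.slope ((F : C)) ≤ h.slope E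

/-- A nonzero subobject `F` of `X` is costable in `X` if `μ(F') > μ(F)` for every
subobject `F'` of `X` strictly containing `F`. -/
def Costable (h : HNSetting C A) {X : C} (F : Subobject X) : Prop :=
  ¬ IsZero ((F : C)) ∧ ∀ F' : Subobject X, F < F' → h.slope ((F : C)) < h.slope ((F' : C))

end HNSetting

/-- The quotient `Y/X` of two nested subobjects `X ≤ Y` of an object `E`. -/
noncomputable def subQuotient {C : Type u} [Category.{v} C] [Abelian C] {E : C}
    (X Y : Subobject E) (hXY : X ≤ Y) : C :=
  cokernel (Subobject.ofLE X Y hXY)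

/-!
Above a subobject `X < E`, choose `F > X` maximising first the slope of `F / X` and then the
rank of `F`; the maximum exists because degrees and ranks of subobjects are bounded by those of
`E`, so these slopes take finitely many values. Subobjects of `F / X` are of the form `W / X`
with `X ≤ W ≤ F`, so `F / X` is semi-stable. For `W > F`, the slope of `W / X` is a weighted
mean of those of `F / X` and `W / F`, so maximality forces `μ(W / F) < μ(F / X)`. Iterating
from `X = 0` produces the filtration, and the iteration stops because the rank strictly
increases at each step.
-/

section ShortExactAdditive

variable {C : Type u} [Category.{v} C] [Abelian C]

def IsShortExactAdditive (f : C → ℕ) : Prop :=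
  ∀ S : ShortComplex C, S.ShortExact → f S.X₂ = f S.X₁ + f S.X₃

namespace IsShortExactAdditive

variable {f : C → ℕ} (hf : IsShortExactAdditive f)
include hf

lemma eq_zero_of_isZero {X : C} (hX : IsZero X) : f X = 0 := by
  have := hf (ShortComplex.mk (𝟙 X) (𝟙 X) (hX.eq_of_src _ _))
    { exact := ShortComplex.exact_of_isZero_X₂ _ hX }
  simpa using this

open ZeroObject in
lemma eq_of_iso {X Y : C} (e : X ≅ Y) : f X = f Y := by
  have : Mono (0 : (0 : C) ⟶ X) := (isZero_zero C).mono _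
  have := hf (ShortComplex.mk (0 : (0 : C) ⟶ X) e.hom zero_comp)
    { exact := (ShortComplex.exact_iff_mono _ rfl).2 inferInstance }
  simpa [hf.eq_zero_of_isZero (isZero_zero C)] using this

lemma eq_add_subQuotient {E : C} {X Y : Subobject E} (hXY : X ≤ Y) :
    f Y = f X + f (subQuotient X Y hXY) :=
  hf (ShortComplex.mk _ _ (cokernel.condition (Subobject.ofLE X Y hXY)))
    { exact := ShortComplex.exact_of_g_is_cokernel _ (cokernelIsCokernel _) }

lemma monotone_subobject {E : C} : Monotone fun X : Subobject E => f X :=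
  fun _ _ hXY => (Nat.le_add_right _ _).trans (hf.eq_add_subQuotient hXY).ge

end IsShortExactAdditive

lemma not_isZero_subQuotient_of_lt {E : C} {X Y : Subobject E} (hXY : X < Y) :
    ¬ IsZero (subQuotient X Y hXY.le) := fun hZ => by
  have : Epi (Subobject.ofLE X Y hXY.le) :=
    Abelian.epi_of_cokernel_π_eq_zero _ (hZ.eq_of_tgt _ _)
  have : IsIso (Subobject.ofLE X Y hXY.le) := isIso_of_mono_of_epi _
  exact hXY.not_ge (Subobject.le_of_comm (inv (Subobject.ofLE X Y hXY.le)) (by simp))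

lemma exists_between_of_subobject_subQuotient {E : C} {X Y : Subobject E} (hXY : X ≤ Y)
    (G : Subobject (subQuotient X Y hXY)) :
    ∃ W : Subobject E, X ≤ W ∧ W ≤ Y ∧
      ∀ f : C → ℕ, IsShortExactAdditive f → f W = f X + f G := by
  let ι := Subobject.ofLE X Y hXY
  let π : (Y : C) ⟶ subQuotient X Y hXY := cokernel.π ι
  have : Epi π := inferInstanceAs (Epi (cokernel.π ι))
  -- `W` will be the preimage of `G` in `Y`, i.e. this pullback; `X → W → G` is short exact.
  let ℓ : (X : C) ⟶ pullback G.arrow π :=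
    pullback.lift 0 ι (zero_comp.trans (cokernel.condition ι).symm)
  have hℓfst : ℓ ≫ pullback.fst _ _ = 0 := pullback.lift_fst _ _ _
  have hℓsnd : ℓ ≫ pullback.snd _ _ = ι := pullback.lift_snd _ _ _
  have : Mono ℓ := mono_of_mono_fac hℓsnd
  have hS : (ShortComplex.mk ℓ (pullback.fst G.arrow π) hℓfst).ShortExact := by
    refine { exact := (ShortComplex.exact_iff_exact_up_to_refinements _).2 fun T x hx => ?_ }
    have hx : x ≫ pullback.fst G.arrow π = 0 := hx
    have hxπ : (x ≫ pullback.snd G.arrow π) ≫ π = 0 := by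
      rw [Category.assoc, ← pullback.condition, ← Category.assoc, hx, zero_comp]
    refine ⟨T, 𝟙 T, inferInstance, Abelian.monoLift ι _ hxπ, ?_⟩
    apply pullback.hom_ext
    · simp [hx, hℓfst]
    · simp only [Category.id_comp, Category.assoc, hℓsnd]
      exact (Abelian.monoLift_comp ι _ hxπ).symm
  refine ⟨Subobject.mk (pullback.snd G.arrow π ≫ Y.arrow), Subobject.le_mk_of_comm ℓ ?_,
    Subobject.mk_le_of_comm _ rfl, fun f hf => ?_⟩
  · simp [reassoc_of% hℓsnd, ι]
  · rw [hf.eq_of_iso (Subobject.underlyingIso _)]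
    exact hf _ hS

end ShortExactAdditive

lemma div_le_add_div_add {K : Type*} [Field K] [LinearOrder K] [IsStrictOrderedRing K]
    {a b c d : K} (hb : 0 < b) (hd : 0 < d) (h : a / b ≤ c / d) :
    a / b ≤ (a + c) / (b + d) := by
  rw [div_le_div_iff₀ hb hd] at h
  rw [div_le_div_iff₀ hb (add_pos hb hd)]
  linarith

namespace HNSetting

variable {C : Type u} {A : Type u'} [Category.{v} C] [Category.{v'} A] [Abelian C] [Abelian A]
  (h : HNSetting C A)

def rk (X : C) : ℕ := h.r (h.η.obj X)

lemma isShortExactAdditive_d : IsShortExactAdditive h.d := h.d_additive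

lemma isShortExactAdditive_rk : IsShortExactAdditive h.rk := by
  have := h.η_additive
  have := h.η_preservesFiniteLimits
  have := h.η_preservesFiniteColimits
  exact fun S hS => h.r_additive _ (hS.map_of_exact h.η)

variable {E : C}

lemma rk_lt_rk_of_lt {X Y : Subobject E} (hXY : X < Y) : h.rk X < h.rk Y := by
  have hrk := h.isShortExactAdditive_rk.eq_add_subQuotient hXY.le
  have hpos : h.rk (subQuotient X Y hXY.le) ≠ 0 :=
    (h.hn1 _).not.2 (not_isZero_subQuotient_of_lt hXY)
  omega

include h in
lemma wellFoundedGT_subobject (E : C) : WellFoundedGT (Subobject E) :=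
  StrictAnti.wellFoundedGT (f := fun X : Subobject E => h.rk (⊤ : Subobject E) - h.rk X)
    fun X Y hXY => by
      have hlt := h.rk_lt_rk_of_lt hXY
      have hle : h.rk Y ≤ h.rk (⊤ : Subobject E) :=
        h.isShortExactAdditive_rk.monotone_subobject le_top
      dsimp only
      omega

/-- The slope of `Y / X`, computed from `X` and `Y` alone so that, unlike
`h.slope (subQuotient X Y _)`, it does not depend on a proof of `X ≤ Y`. -/
noncomputable def intervalSlope (X Y : Subobject E) : ℚ :=
  ((h.d Y : ℚ) - h.d X) / ((h.rk Y : ℚ) - h.rk X)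

lemma intervalSlope_eq_slope {X Y : Subobject E} {Q : C} (hd : h.d Y = h.d X + h.d Q)
    (hrk : h.rk Y = h.rk X + h.rk Q) : h.intervalSlope X Y = h.slope Q := by
  simp only [intervalSlope, hd, hrk, Nat.cast_add, add_sub_cancel_left]
  rfl

lemma slope_subQuotient {X Y : Subobject E} (hXY : X ≤ Y) :
    h.slope (subQuotient X Y hXY) = h.intervalSlope X Y :=
  (h.intervalSlope_eq_slope (h.isShortExactAdditive_d.eq_add_subQuotient hXY)
    (h.isShortExactAdditive_rk.eq_add_subQuotient hXY)).symm

lemma intervalSlope_le_of_le_intervalSlope {X Y Z : Subobject E} (hXY : X < Y) (hYZ : Y < Z)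
    (hle : h.intervalSlope X Y ≤ h.intervalSlope Y Z) :
    h.intervalSlope X Y ≤ h.intervalSlope X Z := by
  have hXZ : h.intervalSlope X Z = ((h.d Y - h.d X : ℚ) + (h.d Z - h.d Y)) /
      ((h.rk Y - h.rk X : ℚ) + (h.rk Z - h.rk Y)) := by
    rw [intervalSlope]
    ring_nf
  rw [hXZ]
  have hrk : ∀ {X Y : Subobject E}, X < Y → (0 : ℚ) < h.rk Y - h.rk X := fun hXY =>
    sub_pos.2 (Nat.cast_lt.2 (h.rk_lt_rk_of_lt hXY))
  exact div_le_add_div_add (hrk hXY) (hrk hYZ) hle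

def IsSemistableInterval (X Y : Subobject E) : Prop :=
  X < Y ∧ ∀ W, X < W → W ≤ Y → h.intervalSlope X W ≤ h.intervalSlope X Y

variable {h} in
lemma IsSemistableInterval.semistable {X Y : Subobject E}
    (hXY : h.IsSemistableInterval X Y) : h.Semistable (subQuotient X Y hXY.1.le) := by
  refine ⟨not_isZero_subQuotient_of_lt hXY.1, fun G hG => ?_⟩
  obtain ⟨W, hXW, hWY, hW⟩ := exists_between_of_subobject_subQuotient hXY.1.le G
  have hd := hW _ h.isShortExactAdditive_d
  have hrk := hW _ h.isShortExactAdditive_rk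
  have hXW : X < W := hXW.lt_of_ne fun hXW => hG <| (h.hn1 _).1 <| by
    subst hXW
    change h.rk G = 0
    omega
  rw [← h.intervalSlope_eq_slope hd hrk, h.slope_subQuotient]
  exact hXY.2 W hXW hWY

structure IsMaxDestabilizing (X F : Subobject E) : Prop where
  lt : X < F
  intervalSlope_le : ∀ W, X < W → h.intervalSlope X W ≤ h.intervalSlope X F
  rk_le : ∀ W, X < W → h.intervalSlope X W = h.intervalSlope X F → h.rk W ≤ h.rk F

lemma exists_isMaxDestabilizing {X : Subobject E} (hX : X < ⊤) :
    ∃ F, h.IsMaxDestabilizing X F := by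
  let key : Subobject E → ℚ ×ₗ ℕ := fun W => toLex (h.intervalSlope X W, h.rk W)
  have hfin : (key '' {W | X < W}).Finite := by
    refine ((Set.finite_Iic (h.d (⊤ : Subobject E))).prod
      (Set.finite_Iic (h.rk (⊤ : Subobject E)))).image
      (fun p : ℕ × ℕ => toLex (((p.1 : ℚ) - h.d X) / ((p.2 : ℚ) - h.rk X), p.2)) |>.subset ?_
    rintro _ ⟨W, -, rfl⟩
    exact ⟨(h.d W, h.rk W), ⟨h.isShortExactAdditive_d.monotone_subobject le_top,
      h.isShortExactAdditive_rk.monotone_subobject le_top⟩, rfl⟩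
  obtain ⟨F, hXF, hF⟩ := hfin.exists_maximalFor' key _ ⟨⊤, hX⟩
  have hle : ∀ W, X < W → key W ≤ key F := fun W hW =>
    le_of_not_gt fun hlt => hlt.not_ge (hF hW hlt.le)
  refine ⟨F, hXF, fun W hW => ?_, fun W hW heq => ?_⟩
  · rcases Prod.Lex.toLex_le_toLex.1 (hle W hW) with hlt | ⟨heq, -⟩
    exacts [hlt.le, heq.le]
  · rcases Prod.Lex.toLex_le_toLex.1 (hle W hW) with hlt | ⟨-, hrk⟩
    exacts [absurd heq hlt.ne, hrk]

namespace IsMaxDestabilizing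

variable {h} {X F : Subobject E} (hF : h.IsMaxDestabilizing X F)
include hF

lemma isSemistableInterval : h.IsSemistableInterval X F :=
  ⟨hF.lt, fun W hXW _ => hF.intervalSlope_le W hXW⟩

lemma intervalSlope_lt {W : Subobject E} (hFW : F < W) :
    h.intervalSlope F W < h.intervalSlope X F := by
  by_contra! hle
  have hXW := hF.lt.trans hFW
  have heq := le_antisymm (hF.intervalSlope_le W hXW)
    (h.intervalSlope_le_of_le_intervalSlope hF.lt hFW hle)
  exact (h.rk_lt_rk_of_lt hFW).not_ge (hF.rk_le W hXW heq)

end IsMaxDestabilizing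

theorem exists_hnFiltration_from (X : Subobject E) :
    ∃ (n : ℕ) (F : Fin (n + 1) → Subobject E), F 0 = X ∧ F (Fin.last n) = ⊤ ∧
      (∀ i : Fin n, h.IsSemistableInterval (F i.castSucc) (F i.succ)) ∧
      StrictAnti fun i : Fin n => h.intervalSlope (F i.castSucc) (F i.succ) := by
  have := h.wellFoundedGT_subobject E
  induction X using WellFoundedGT.induction with
  | _ X ih =>
  rcases (le_top : X ≤ ⊤).eq_or_lt with rfl | hX
  · exact ⟨0, fun _ => ⊤, rfl, rfl, Fin.elim0, Subsingleton.strictAnti _⟩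
  obtain ⟨F₁, hF₁⟩ := h.exists_isMaxDestabilizing hX
  obtain ⟨n, G, rfl, hGlast, hGss, hGanti⟩ := ih _ hF₁.lt
  refine ⟨n + 1, Fin.cons X G, rfl, by simpa using hGlast, Fin.forall_fin_succ.2
    ⟨by simpa using hF₁.isSemistableInterval, by simpa using hGss⟩, ?_⟩
  rw [Fin.strictAnti_iff_succ_lt]
  rcases n with _ | n
  · exact nofun
  exact Fin.forall_fin_succ.2 ⟨hF₁.intervalSlope_lt (hGss 0).1,
    fun i => by simpa using hGanti (Fin.castSucc_lt_succ (i := i))⟩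

end HNSetting

theorem HNSetting.exists_harderNarasimhanFiltration_general
    {C : Type u} {A : Type u'} [Category.{v} C] [Category.{v'} A]
    [Abelian C] [Abelian A] (h : HNSetting C A)
    (E : C) :
    ∃ (n : ℕ) (F : Fin (n + 1) → Subobject E) (hmono : StrictMono F),
      F 0 = ⊥ ∧ F (Fin.last n) = ⊤ ∧
      (∀ i : Fin n, h.Semistable
        (subQuotient (F i.castSucc) (F i.succ) (hmono (Fin.castSucc_lt_succ : i.castSucc < i.succ)).le)) ∧
      StrictAnti (fun i : Fin n =>
        h.slope (subQuotient (F i.castSucc) (F i.succ)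
          (hmono (Fin.castSucc_lt_succ : i.castSucc < i.succ)).le)) := by
  obtain ⟨n, F, hF0, hFlast, hss, hanti⟩ := h.exists_hnFiltration_from (⊥ : Subobject E)
  have hmono : StrictMono F := Fin.strictMono_iff_lt_succ.2 fun i => (hss i).1
  refine ⟨n, F, hmono, hF0, hFlast, fun i => (hss i).semistable, ?_⟩
  simpa only [h.slope_subQuotient] using hanti

/-- Proposition 1.3.9 (existence): every nonzero object `E` admits a Harder–Narasimhan
filtration, i.e. a strictly increasing chain of subobjects `0 = F₀ < F₁ < ⋯ < Fₙ = E`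
with semi-stable successive quotients of strictly decreasing slopes. -/
theorem HNSetting.exists_harderNarasimhanFiltration
    {C : Type u} {A : Type u'} [Category.{v} C] [Category.{v'} A]
    [Abelian C] [Abelian A] (h : HNSetting C A)
    (E : C) (hE : ¬ IsZero E) :
    ∃ (n : ℕ) (F : Fin (n + 1) → Subobject E) (hmono : StrictMono F),
      F 0 = ⊥ ∧ F (Fin.last n) = ⊤ ∧
      (∀ i : Fin n, h.Semistable
        (subQuotient (F i.castSucc) (F i.succ) (hmono (Fin.castSucc_lt_succ : i.castSucc < i.succ)).le)) ∧
      StrictAnti (fun i : Fin n =>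
        h.slope (subQuotient (F i.castSucc) (F i.succ)
          (hmono (Fin.castSucc_lt_succ : i.castSucc < i.succ)).le)) :=
  HNSetting.exists_harderNarasimhanFiltration_general h E
end

section
/- The Harder–Narasimhan filtration of a nonzero object E of C is unique: if 0 = F₀ < F₁ < ⋯ < Fₙ = E and 0 = F'₀ < F'₁ < ⋯ < F'ₘ = E are two strictly increasing chains of subobjects of E such that all successive quotients Fᵢ/Fᵢ₋₁ and F'ⱼ/F'ⱼ₋₁ are semi-stable and in each chain the slopes of the successive quotients are strictly decreasing, then n = m and Fᵢ = F'ᵢ as subobjects of E for every i. -/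
/-! If two Harder–Narasimhan filtrations agree up to `F i = G i`, the semi-stable quotient
`F (i+1) / F i` maps nontrivially to `G (k+1) / G k` for the least `k` with `F (i+1) ≤ G (k+1)`.
Since a nonzero map between semi-stable objects does not decrease the slope and the slopes of
`G` strictly decrease, `μ (F (i+1) / F i) ≤ μ (G (i+1) / G i)`, with equality only if `k = i`,
i.e. `F (i+1) ≤ G (i+1)`. By symmetry the two slopes agree and `F (i+1) = G (i+1)`. Once the
terms agree, the lengths do too, as both chains reach `⊤` exactly at their last index. -/

open CategoryTheory CategoryTheory.Limits

universe v u v' u'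

theorem div_le_add_div_add_iff {α : Type*} [Field α] [LinearOrder α] [IsStrictOrderedRing α]
    {a b c d : α} (hb : 0 < b) (hd : 0 < d) :
    a / b ≤ (a + c) / (b + d) ↔ (a + c) / (b + d) ≤ c / d := by
  rw [div_le_div_iff₀ hb (by positivity), div_le_div_iff₀ (by positivity) hd]
  constructor <;> intro <;> linarith

section SubQuotient

variable {C : Type u} [Category.{v} C] [Abelian C] {E : C}

theorem shortExact_kernelSubobject {X Y : C} (g : X ⟶ Y) [Epi g] :
    (ShortComplex.mk (kernelSubobject g).arrow g (kernelSubobject_arrow_comp g)).ShortExact :=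
  .mk' ((ShortComplex.exact_iff_image_eq_kernel _).2 (by
    simp only [imageSubobject_mono, Subobject.mk_arrow])) inferInstance inferInstance

theorem exists_hom_subQuotient_ne_zero {P Q S T : Subobject E} (hPS : P ≤ S) (hQT : Q ≤ T)
    (hPQ : P ≤ Q) (hST : S ≤ T) (hSQ : ¬ S ≤ Q) :
    ∃ f : subQuotient P S hPS ⟶ subQuotient Q T hQT, f ≠ 0 := by
  have w : Subobject.ofLE P S hPS ≫ Subobject.ofLE S T hST =
      Subobject.ofLE P Q hPQ ≫ Subobject.ofLE Q T hQT := by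
    rw [Subobject.ofLE_comp_ofLE, Subobject.ofLE_comp_ofLE]
  refine ⟨cokernel.map _ _ _ _ w, fun hf => hSQ ?_⟩
  replace hf : cokernel.map _ _ _ _ w = 0 := hf
  have hzero : Subobject.ofLE S T hST ≫ cokernel.π (Subobject.ofLE Q T hQT) = 0 := by
    simpa using cokernel.π (Subobject.ofLE P S hPS) ≫= hf
  refine Subobject.le_of_comm (Abelian.monoLift _ _ hzero) ?_
  rw [← Subobject.ofLE_arrow hQT, ← Category.assoc, Abelian.monoLift_comp, Subobject.ofLE_arrow]

noncomputable def successiveQuotient {n : ℕ} (F : Fin (n + 1) → Subobject E) (hF : Monotone F)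
    (i : Fin n) : C :=
  subQuotient (F i.castSucc) (F i.succ) (hF (Fin.castSucc_le_succ i))

end SubQuotient

theorem Fin.exists_not_castSucc_and_succ {m : ℕ} {p : Fin (m + 1) → Prop} {j : Fin (m + 1)}
    (hj : ∀ i ≤ j, ¬ p i) (hlast : p (Fin.last m)) :
    ∃ k : Fin m, j < k.succ ∧ ¬ p k.castSucc ∧ p k.succ := by
  obtain ⟨k₀, hk₀, hmin⟩ := wellFounded_lt.has_min {i | p i} ⟨_, hlast⟩
  have hjk₀ : j < k₀ := lt_of_not_ge fun hle => hj _ hle hk₀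
  obtain ⟨k, rfl⟩ := Fin.exists_succ_eq.2 ((Fin.zero_le j).trans_lt hjk₀).ne'
  exact ⟨k, hjk₀, fun hk => hmin _ hk Fin.castSucc_lt_succ, hk₀⟩

namespace HNSetting

variable {C : Type u} {A : Type u'} [Category.{v} C] [Category.{v'} A]
  [Abelian C] [Abelian A] (h : HNSetting C A)

theorem d_eq_zero_of_isZero {X : C} (hX : IsZero X) : h.d X = 0 := by
  have := h.d_additive (ShortComplex.mk (𝟙 X) (𝟙 X) (hX.eq_of_src _ _))
    (.mk' (ShortComplex.exact_of_isZero_X₂ _ hX) inferInstance inferInstance)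
  dsimp at this
  omega

theorem r_obj_eq_add {S : ShortComplex C} (hS : S.ShortExact) :
    h.r (h.η.obj S.X₂) = h.r (h.η.obj S.X₁) + h.r (h.η.obj S.X₃) := by
  have := h.η_additive
  have := h.η_preservesFiniteLimits
  have := h.η_preservesFiniteColimits
  exact h.r_additive _ (hS.map_of_exact h.η)

theorem r_obj_pos {X : C} (hX : ¬ IsZero X) : (0 : ℚ) < h.r (h.η.obj X) :=
  Nat.cast_pos.2 (Nat.pos_of_ne_zero fun h0 => hX ((h.hn1 X).1 h0))

theorem slope_le_iff_of_shortExact {S : ShortComplex C} (hS : S.ShortExact)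
    (h₁ : ¬ IsZero S.X₁) (h₃ : ¬ IsZero S.X₃) :
    h.slope S.X₁ ≤ h.slope S.X₂ ↔ h.slope S.X₂ ≤ h.slope S.X₃ := by
  unfold slope
  rw [h.d_additive S hS, h.r_obj_eq_add hS, Nat.cast_add, Nat.cast_add]
  exact div_le_add_div_add_iff (h.r_obj_pos h₁) (h.r_obj_pos h₃)

variable {h}

theorem Semistable.slope_le_of_epi {X Y : C} (hX : h.Semistable X) (g : X ⟶ Y) [Epi g]
    (hY : ¬ IsZero Y) : h.slope X ≤ h.slope Y := by
  have hS := shortExact_kernelSubobject g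
  by_cases hK : IsZero (kernelSubobject g : C)
  · have hd := h.d_additive _ hS
    have hr := h.r_obj_eq_add hS
    dsimp at hd hr
    rw [h.d_eq_zero_of_isZero hK, zero_add] at hd
    rw [(h.hn1 _).2 hK, zero_add] at hr
    simp only [slope, hd, hr, le_refl]
  · exact (h.slope_le_iff_of_shortExact hS hK hY).1 (hX.2 _ hK)

theorem Semistable.slope_le_of_hom_ne_zero {X Y : C} (hX : h.Semistable X)
    (hY : h.Semistable Y) (f : X ⟶ Y) (hf : f ≠ 0) : h.slope X ≤ h.slope Y := by
  have hI : ¬ IsZero (imageSubobject f : C) := fun hI =>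
    hf (by rw [← imageSubobject_arrow_comp f, hI.eq_of_tgt (factorThruImageSubobject f) 0,
      zero_comp])
  exact (hX.slope_le_of_epi (factorThruImageSubobject f) hI).trans (hY.2 _ hI)

variable {E : C}

structure IsHNFiltration (h : HNSetting C A) {n : ℕ} (F : Fin (n + 1) → Subobject E) : Prop where
  strictMono : StrictMono F
  bot : F 0 = ⊥
  top : F (Fin.last n) = ⊤
  semistable : ∀ i, h.Semistable (successiveQuotient F strictMono.monotone i)
  slope_strictAnti : StrictAnti fun i => h.slope (successiveQuotient F strictMono.monotone i)

namespace IsHNFiltration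

variable {n m : ℕ} {F : Fin (n + 1) → Subobject E} {G : Fin (m + 1) → Subobject E}

/- `P` is not replaced by `G j.castSucc` so that the lemma applies to `F i.succ / F i.castSucc`
whenever `F i.castSucc = G j.castSucc`, without transporting `hPS`. -/
theorem slope_le_of_not_le (hG : h.IsHNFiltration G) (j : Fin m) {P S : Subobject E}
    (hPS : P ≤ S) (hP : P = G j.castSucc) (hS : h.Semistable (subQuotient P S hPS))
    (hSP : ¬ S ≤ P) :
    h.slope (subQuotient P S hPS) ≤ h.slope (successiveQuotient G hG.strictMono.monotone j) ∧
      (h.slope (subQuotient P S hPS) = h.slope (successiveQuotient G hG.strictMono.monotone j) →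
        S ≤ G j.succ) := by
  subst hP
  obtain ⟨k, hjk, hSk, hSk'⟩ := Fin.exists_not_castSucc_and_succ (p := fun i => S ≤ G i)
    (fun i hi hSi => hSP (hSi.trans (hG.strictMono.monotone hi))) (hG.top ▸ le_top)
  obtain ⟨f, hf⟩ := exists_hom_subQuotient_ne_zero hPS
    (hG.strictMono.monotone (Fin.castSucc_le_succ k))
    (hG.strictMono.monotone (Fin.castSucc_le_castSucc_iff.2 (Fin.castSucc_lt_succ_iff.1 hjk)))
    hSk' hSk
  have hSk_le := hS.slope_le_of_hom_ne_zero (hG.semistable k) f hf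
  have hkj := hG.slope_strictAnti.antitone (Fin.castSucc_lt_succ_iff.1 hjk)
  refine ⟨hSk_le.trans hkj, fun heq => ?_⟩
  obtain rfl : k = j := hG.slope_strictAnti.injective (hkj.antisymm (heq ▸ hSk_le))
  exact hSk'

theorem succ_eq_of_castSucc_eq (hF : h.IsHNFiltration F) (hG : h.IsHNFiltration G)
    {i : Fin n} {j : Fin m} (hij : F i.castSucc = G j.castSucc) : F i.succ = G j.succ := by
  have hFG := hG.slope_le_of_not_le j _ hij (hF.semistable i)
    (hF.strictMono Fin.castSucc_lt_succ).not_ge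
  have hGF := hF.slope_le_of_not_le i _ hij.symm (hG.semistable j)
    (hG.strictMono Fin.castSucc_lt_succ).not_ge
  exact (hFG.2 (hFG.1.antisymm hGF.1)).antisymm (hGF.2 (hGF.1.antisymm hFG.1))

theorem apply_mk_eq (hF : h.IsHNFiltration F) (hG : h.IsHNFiltration G) :
    ∀ (i : ℕ) (hi : i < n + 1) (hi' : i < m + 1), F ⟨i, hi⟩ = G ⟨i, hi'⟩
  | 0, _, _ => hF.bot.trans hG.bot.symm
  | i + 1, hi, hi' =>
    hF.succ_eq_of_castSucc_eq hG (i := ⟨i, by omega⟩) (j := ⟨i, by omega⟩)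
      (hF.apply_mk_eq hG i (by omega) (by omega))

theorem length_eq_of_le (hF : h.IsHNFiltration F) (hG : h.IsHNFiltration G) (hnm : n ≤ m) :
    n = m :=
  congrArg Fin.val (hG.strictMono.injective
    ((hF.apply_mk_eq hG n n.lt_succ_self (by omega)).symm.trans (hF.top.trans hG.top.symm)) :
      (⟨n, by omega⟩ : Fin (m + 1)) = Fin.last m)

theorem length_eq (hF : h.IsHNFiltration F) (hG : h.IsHNFiltration G) : n = m :=
  (le_total n m).elim (hF.length_eq_of_le hG) fun hmn => (hG.length_eq_of_le hF hmn).symm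

end IsHNFiltration

end HNSetting

theorem HNSetting.harderNarasimhanFiltration_unique_general
    {C : Type u} {A : Type u'} [Category.{v} C] [Category.{v'} A]
    [Abelian C] [Abelian A] (h : HNSetting C A)
    (E : C)
    (n m : ℕ) (F : Fin (n + 1) → Subobject E) (G : Fin (m + 1) → Subobject E)
    (hFmono : StrictMono F) (hGmono : StrictMono G)
    (hFbot : F 0 = ⊥) (hFtop : F (Fin.last n) = ⊤)
    (hGbot : G 0 = ⊥) (hGtop : G (Fin.last m) = ⊤)
    (hFsemi : ∀ i : Fin n, h.Semistable
      (subQuotient (F i.castSucc) (F i.succ) (hFmono (Fin.castSucc_lt_succ : i.castSucc < i.succ)).le))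
    (hGsemi : ∀ j : Fin m, h.Semistable
      (subQuotient (G j.castSucc) (G j.succ) (hGmono (Fin.castSucc_lt_succ : j.castSucc < j.succ)).le))
    (hFanti : StrictAnti (fun i : Fin n =>
      h.slope (subQuotient (F i.castSucc) (F i.succ)
        (hFmono (Fin.castSucc_lt_succ : i.castSucc < i.succ)).le)))
    (hGanti : StrictAnti (fun j : Fin m =>
      h.slope (subQuotient (G j.castSucc) (G j.succ)
        (hGmono (Fin.castSucc_lt_succ : j.castSucc < j.succ)).le))) :
    n = m ∧ ∀ (i : ℕ) (hi : i < n + 1) (hi' : i < m + 1), F ⟨i, hi⟩ = G ⟨i, hi'⟩ := by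
  have hF : h.IsHNFiltration F := ⟨hFmono, hFbot, hFtop, hFsemi, hFanti⟩
  have hG : h.IsHNFiltration G := ⟨hGmono, hGbot, hGtop, hGsemi, hGanti⟩
  exact ⟨hF.length_eq hG, hF.apply_mk_eq hG⟩

/-- Proposition 1.3.9 (uniqueness): the Harder–Narasimhan filtration of a nonzero object
is unique: two strictly increasing chains of subobjects from `0` to `E` with semi-stable
successive quotients of strictly decreasing slopes have the same length and the same
terms. -/
theorem HNSetting.harderNarasimhanFiltration_unique
    {C : Type u} {A : Type u'} [Category.{v} C] [Category.{v'} A]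
    [Abelian C] [Abelian A] (h : HNSetting C A)
    (E : C) (hE : ¬ IsZero E)
    (n m : ℕ) (F : Fin (n + 1) → Subobject E) (G : Fin (m + 1) → Subobject E)
    (hFmono : StrictMono F) (hGmono : StrictMono G)
    (hFbot : F 0 = ⊥) (hFtop : F (Fin.last n) = ⊤)
    (hGbot : G 0 = ⊥) (hGtop : G (Fin.last m) = ⊤)
    (hFsemi : ∀ i : Fin n, h.Semistable
      (subQuotient (F i.castSucc) (F i.succ) (hFmono (Fin.castSucc_lt_succ : i.castSucc < i.succ)).le))
    (hGsemi : ∀ j : Fin m, h.Semistable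
      (subQuotient (G j.castSucc) (G j.succ) (hGmono (Fin.castSucc_lt_succ : j.castSucc < j.succ)).le))
    (hFanti : StrictAnti (fun i : Fin n =>
      h.slope (subQuotient (F i.castSucc) (F i.succ)
        (hFmono (Fin.castSucc_lt_succ : i.castSucc < i.succ)).le)))
    (hGanti : StrictAnti (fun j : Fin m =>
      h.slope (subQuotient (G j.castSucc) (G j.succ)
        (hGmono (Fin.castSucc_lt_succ : j.castSucc < j.succ)).le))) :
    n = m ∧ ∀ (i : ℕ) (hi : i < n + 1) (hi' : i < m + 1), F ⟨i, hi⟩ = G ⟨i, hi'⟩ :=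
  HNSetting.harderNarasimhanFiltration_unique_general h E n m F G hFmono hGmono hFbot hFtop hGbot
    hGtop hFsemi hGsemi hFanti hGanti
end
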